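/- Under projected dual descent μ_{k+1} = [μ_k − η g_k]_+ with each ‖g_k‖_∞ ≤ G, the averaged complementary-slackness term satisfies limsup_{K→∞} (1/K) Σ_{k=0}^{K−1} ⟨μ_k, g_k⟩ ≤ cηG²/2. -/

import Mathlib

/-- Under projected dual descent with componentwise bounded constraint gradients,
the averaged complementary-slackness term has limsup at most `c * η * G ^ 2 / 2`. -/
theorem limsup_averaged_slackness (c : ℕ) (η G : ℝ) (hη : 0 < η) (hG : 0 < G)
    (μ g : ℕ → EuclideanSpace ℝ (Fin c))
    (hμ0 : ∀ i, 0 ≤ μ 0 i)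
    (hproj : ∀ k i, μ (k + 1) i = max (μ k i - η * g k i) 0)
    (hgG : ∀ k i, |g k i| ≤ G) :
    Filter.limsup
      (fun K : ℕ => (1 / (K : ℝ)) * ∑ k ∈ Finset.range K, ∑ i, μ k i * g k i)
      Filter.atTop ≤ (c : ℝ) * η * G ^ 2 / 2 := by
  set S : ℕ → ℝ := fun k => ∑ i, (μ k i) ^ 2 with hS
  set D : ℕ → ℝ := fun k => ∑ i, μ k i * g k i with hD
  set f : ℕ → ℝ := fun K : ℕ => (1 / (K : ℝ)) * ∑ k ∈ Finset.range K, D k with hf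
  set L : ℝ := (c : ℝ) * η * G ^ 2 / 2 with hL
  have hL0 : 0 ≤ L := by positivity
  -- step inequality
  have step : ∀ k, 2 * η * D k ≤ S k - S (k + 1) + η ^ 2 * c * G ^ 2 := by
    intro k
    have h1 : S (k + 1) ≤ S k - 2 * η * D k + η ^ 2 * (c : ℝ) * G ^ 2 := by
      have hterm : ∀ i, (μ (k + 1) i) ^ 2 ≤
          (μ k i) ^ 2 - 2 * η * (μ k i * g k i) + η ^ 2 * G ^ 2 := by
        intro i
        have h2 : (μ (k + 1) i) ^ 2 ≤ (μ k i - η * g k i) ^ 2 := by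
          rw [hproj k i]
          have hm : max (μ k i - η * g k i) 0 ≤ |μ k i - η * g k i| :=
            max_le (le_abs_self _) (abs_nonneg _)
          calc (max (μ k i - η * g k i) 0) ^ 2
              ≤ |μ k i - η * g k i| ^ 2 :=
                pow_le_pow_left₀ (le_max_right _ 0) hm 2
            _ = (μ k i - η * g k i) ^ 2 := sq_abs _
        have hg2 : (g k i) ^ 2 ≤ G ^ 2 := by
          rw [← sq_abs]
          exact pow_le_pow_left₀ (abs_nonneg _) (hgG k i) 2
        nlinarith [sq_nonneg (μ k i - η * g k i), sq_nonneg η]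
      calc S (k + 1) ≤ ∑ i, ((μ k i) ^ 2 - 2 * η * (μ k i * g k i) + η ^ 2 * G ^ 2) :=
            Finset.sum_le_sum fun i _ => hterm i
        _ = S k - 2 * η * D k + η ^ 2 * (c : ℝ) * G ^ 2 := by
            simp [hS, hD, Finset.sum_add_distrib, Finset.sum_sub_distrib,
              ← Finset.mul_sum, Finset.sum_const]
            ring
    linarith
  -- telescoped bound
  have sumbound : ∀ K : ℕ, 2 * η * ∑ k ∈ Finset.range K, D k ≤
      S 0 + K * (η ^ 2 * c * G ^ 2) := by
    intro K
    have h1 : ∑ k ∈ Finset.range K, (2 * η * D k) ≤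
        ∑ k ∈ Finset.range K, (S k - S (k + 1) + η ^ 2 * c * G ^ 2) :=
      Finset.sum_le_sum fun k _ => step k
    have h2 : ∑ k ∈ Finset.range K, (S k - S (k + 1) + η ^ 2 * c * G ^ 2) =
        (S 0 - S K) + K * (η ^ 2 * c * G ^ 2) := by
      rw [Finset.sum_add_distrib, Finset.sum_range_sub' S K]
      simp [Finset.sum_const]
    have h3 : 0 ≤ S K := Finset.sum_nonneg fun i _ => sq_nonneg _
    rw [← Finset.mul_sum] at h1
    linarith
  -- pointwise bound for K ≥ 1
  have fbound : ∀ K : ℕ, 1 ≤ K → f K ≤ S 0 / (2 * η) * (1 / K) + L := by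
    intro K hK
    have hKpos : (0 : ℝ) < K := by exact_mod_cast hK
    have h1 := sumbound K
    have h2 : ∑ k ∈ Finset.range K, D k ≤ S 0 / (2 * η) + K * L := by
      rw [div_add' _ _ _ (by positivity : (2 * η : ℝ) ≠ 0)] at *
      rw [le_div_iff₀ (by positivity : (0:ℝ) < 2 * η)]
      calc (∑ k ∈ Finset.range K, D k) * (2 * η) = 2 * η * ∑ k ∈ Finset.range K, D k := by ring
        _ ≤ S 0 + K * (η ^ 2 * c * G ^ 2) := h1
        _ = S 0 + K * L * (2 * η) := by rw [hL]; ring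
    have : f K = (1 / (K : ℝ)) * ∑ k ∈ Finset.range K, D k := rfl
    rw [this]
    calc (1 / (K : ℝ)) * ∑ k ∈ Finset.range K, D k
        ≤ (1 / (K : ℝ)) * (S 0 / (2 * η) + K * L) := by
          apply mul_le_mul_of_nonneg_left h2 (by positivity)
      _ = S 0 / (2 * η) * (1 / K) + L := by field_simp
  -- the bounding sequence tends to L
  set b : ℕ → ℝ := fun K => S 0 / (2 * η) * (1 / K) + L with hb
  have hbt : Filter.Tendsto b Filter.atTop (nhds L) := by
    have : Filter.Tendsto (fun K : ℕ => S 0 / (2 * η) * (1 / K)) Filter.atTop (nhds 0) := by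
      simpa using tendsto_one_div_atTop_nhds_zero_nat.const_mul (S 0 / (2 * η))
    simpa [hb] using this.add (tendsto_const_nhds (x := L))
  have hfb : ∀ᶠ K in Filter.atTop, f K ≤ b K :=
    Filter.eventually_atTop.2 ⟨1, fun K hK => fbound K hK⟩
  by_cases hcb : Filter.IsCoboundedUnder (· ≤ ·) Filter.atTop f
  · calc Filter.limsup f Filter.atTop ≤ Filter.limsup b Filter.atTop :=
        Filter.limsup_le_limsup hfb hcb hbt.isBoundedUnder_le
      _ = L := hbt.limsup_eq
  · have : Filter.limsup f Filter.atTop = 0 := by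
      rw [Filter.limsup_eq]
      apply Real.sInf_of_not_bddBelow
      intro hbdd
      apply hcb
      obtain ⟨m, hm⟩ := hbdd
      exact ⟨m, fun a ha => hm ha⟩
    rw [this]; exact hL0
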